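/- Any impossibility among the axioms {upper invariance, lower invariance, ordinal efficiency, symmetry} for 4 agents and 4 objects extends to any n > 4: if such a mechanism existed for n agents and n objects, then restricting attention to profiles where agents 5,…,n each uniquely top-rank their own distinct objects e_5,…,e_n (appended below the original four objects in the first four agents' orders) yields a mechanism on 4 agents and 4 objects with the same four properties. -/

import Mathlib

open Finset

/-- A strict preference order over `n` objects, encoded as a rank function:
`P j < P j'` means object `j` is strictly preferred to object `j'`. -/
abbrev Pref (n : ℕ) := Fin n ≃ Fin n

/-- A (random) assignment: rows are agents, columns are objects. -/
abbrev Assignment (n : ℕ) := Fin n → Fin n → ℝ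

/-- Bi-stochastic matrix: nonnegative entries, all rows and columns sum to 1. -/
def BiStochastic {n : ℕ} (x : Assignment n) : Prop :=
  (∀ i j, 0 ≤ x i j) ∧ (∀ i, ∑ j, x i j = 1) ∧ (∀ j, ∑ i, x i j = 1)

/-- A mechanism maps preference profiles to assignments. -/
abbrev Mechanism (n : ℕ) := (Fin n → Pref n) → Assignment n

/-- A mechanism always outputs bi-stochastic matrices. -/
def ValidMech {n : ℕ} (φ : Mechanism n) : Prop := ∀ P, BiStochastic (φ P)

/-- `P'` arises from `P` by swapping the consecutively ranked objects `j ≻ j'`. -/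
def AdjSwap {n : ℕ} (P P' : Pref n) (j j' : Fin n) : Prop :=
  (P j' : ℕ) = (P j : ℕ) + 1 ∧ P' = (Equiv.swap j j').trans P

/-- Upper invariance: a swap of consecutive `j ≻ j'` leaves the swapping agent's
probabilities for objects strictly preferred to `j` unchanged. -/
def UpperInvariant {n : ℕ} (φ : Mechanism n) : Prop :=
  ∀ (P : Fin n → Pref n) (i j j' : Fin n) (P' : Pref n),
    AdjSwap (P i) P' j j' →
    ∀ k, P i k < P i j → φ (Function.update P i P') i k = φ P i k

/-- Lower invariance: a swap of consecutive `j ≻ j'` leaves the swapping agent's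
probabilities for objects ranked strictly below `j'` unchanged. -/
def LowerInvariant {n : ℕ} (φ : Mechanism n) : Prop :=
  ∀ (P : Fin n → Pref n) (i j j' : Fin n) (P' : Pref n),
    AdjSwap (P i) P' j j' →
    ∀ k, P i j' < P i k → φ (Function.update P i P') i k = φ P i k

/-- Swap monotonicity: after a swap of consecutive `j ≻ j'`, either the agent's
assignment vector is unchanged, or her probability for `j` strictly decreases and
her probability for `j'` strictly increases. -/
def SwapMonotonic {n : ℕ} (φ : Mechanism n) : Prop :=
  ∀ (P : Fin n → Pref n) (i j j' : Fin n) (P' : Pref n),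
    AdjSwap (P i) P' j j' →
    φ (Function.update P i P') i = φ P i ∨
      (φ (Function.update P i P') i j < φ P i j ∧
       φ P i j' < φ (Function.update P i P') i j')

/-- `y` first order-stochastically dominates `x` at preference order `P`. -/
def FOSD {n : ℕ} (P : Pref n) (y x : Fin n → ℝ) : Prop :=
  ∀ j, ∑ k ∈ univ.filter (fun k => P k ≤ P j), x k ≤
       ∑ k ∈ univ.filter (fun k => P k ≤ P j), y k

/-- `y` strictly ordinally dominates `x` at profile `P`. -/
def StrictDom {n : ℕ} (P : Fin n → Pref n) (y x : Assignment n) : Prop :=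
  (∀ i, FOSD (P i) (y i) (x i)) ∧
  ∃ i j, ∑ k ∈ univ.filter (fun k => P i k ≤ P i j), x i k <
         ∑ k ∈ univ.filter (fun k => P i k ≤ P i j), y i k

/-- `x` is ordinally efficient at profile `P`. -/
def OrdEffAt {n : ℕ} (P : Fin n → Pref n) (x : Assignment n) : Prop :=
  ¬ ∃ y, BiStochastic y ∧ StrictDom P y x

/-- An ordinally efficient mechanism. -/
def OrdEff {n : ℕ} (φ : Mechanism n) : Prop := ∀ P, OrdEffAt P (φ P)

/-- Symmetry (equal treatment of equals). -/
def SymmetricMech {n : ℕ} (φ : Mechanism n) : Prop :=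
  ∀ P (i i' : Fin n), P i = P i' → φ P i = φ P i'

/-- Anonymity: exchanging two agents' reports exchanges their assignment vectors. -/
def Anonymous {n : ℕ} (φ : Mechanism n) : Prop :=
  ∀ P (i i' : Fin n), φ P i = φ (fun k => P (Equiv.swap i i' k)) i'

/-- Neutrality: relabeling objects via `π` relabels the assignment columns. -/
def Neutral {n : ℕ} (φ : Mechanism n) : Prop :=
  ∀ P (π : Equiv.Perm (Fin n)) (i j : Fin n),
    φ (fun k => π.symm.trans (P k)) i (π j) = φ P i j

/-- Non-bossiness. -/
def NonBossy {n : ℕ} (φ : Mechanism n) : Prop :=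
  ∀ (P : Fin n → Pref n) (i : Fin n) (P' : Pref n),
    φ (Function.update P i P') i = φ P i →
    φ (Function.update P i P') = φ P

/-!
Write `n = 4 + l`. A profile `Q` of the first four agents is extended by letting them rank the
new objects last, and letting each new agent `k` rank object `k` first. At such a profile ordinal
efficiency forces every new agent to receive her top object with probability 1: otherwise the
block-diagonal matrix made of a bistochastic matrix dominating the old agents' block and the
identity on the new agents would strictly dominate. Hence the old agents' block is bistochastic,
and it inherits the axioms: swaps among the first four objects lift to swaps in the extended
profile, and a dominating assignment for four agents lifts block-diagonally.
-/

open Fin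

namespace FOSD
variable {n : ℕ} {P : Pref n} {x y : Fin n → ℝ}

theorem of_upper_closed (U : Set (Fin n)) (hU : ∀ u ∈ U, ∀ j, P j ≤ P u → j ∈ U)
    (hx0 : ∀ j, 0 ≤ x j) (hx1 : ∑ j, x j = 1) (hy1 : ∑ j, y j = 1) (hyU : ∀ j ∉ U, y j = 0)
    (hdom : ∀ u ∈ U, ∑ k ∈ univ.filter (fun k => P k ≤ P u), x k ≤
      ∑ k ∈ univ.filter (fun k => P k ≤ P u), y k) :
    FOSD P y x := by
  intro j
  by_cases hj : j ∈ U
  · exact hdom j hj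
  have hUj : ∀ k ∉ univ.filter (fun k => P k ≤ P j), y k = 0 := fun k hk =>
    hyU k fun hkU => hk (by simpa using (lt_of_not_ge fun h => hj (hU k hkU j h)).le)
  calc ∑ k ∈ univ.filter (fun k => P k ≤ P j), x k ≤ ∑ k, x k :=
        sum_le_sum_of_subset_of_nonneg (subset_univ _) fun k _ _ => hx0 k
    _ = ∑ k ∈ univ.filter (fun k => P k ≤ P j), y k := by
        rw [hx1, ← hy1, sum_subset (subset_univ _) fun k _ hk => hUj k hk]

end FOSD

theorem BiStochastic.le_one {n : ℕ} {x : Assignment n} (hx : BiStochastic x) (i j : Fin n) :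
    x i j ≤ 1 :=
  hx.2.1 i ▸ single_le_sum (fun k _ => hx.1 i k) (mem_univ j)

theorem BiStochastic.row_eq_zero_of_eq_one {n : ℕ} {x : Assignment n} (hx : BiStochastic x)
    {i j j' : Fin n} (hj : x i j = 1) (hj' : j' ≠ j) : x i j' = 0 := by
  have := add_le_sum (s := univ) (fun k _ => hx.1 i k) (mem_univ j') (mem_univ j) hj'
  linarith [hx.1 i j', hx.2.1 i]

theorem BiStochastic.col_eq_zero_of_eq_one {n : ℕ} {x : Assignment n} (hx : BiStochastic x)
    {i i' j : Fin n} (hi : x i j = 1) (hi' : i' ≠ i) : x i' j = 0 := by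
  have := add_le_sum (s := univ) (fun k _ => hx.1 k j) (mem_univ i') (mem_univ i) hi'
  linarith [hx.1 i' j, hx.2.2 j]

theorem exists_biStochastic_ge {m : ℕ} (z : Assignment m) (h0 : ∀ i j, 0 ≤ z i j)
    (hrow : ∀ i, ∑ j, z i j ≤ 1) (hcol : ∀ j, ∑ i, z i j ≤ 1) :
    ∃ w, BiStochastic w ∧ ∀ i j, z i j ≤ w i j := by
  set s : Fin m → ℝ := fun i => 1 - ∑ j, z i j
  set d : Fin m → ℝ := fun j => 1 - ∑ i, z i j
  have hs0 : ∀ i, 0 ≤ s i := fun i => sub_nonneg.2 (hrow i)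
  have hd0 : ∀ j, 0 ≤ d j := fun j => sub_nonneg.2 (hcol j)
  have hsd : ∑ j, d j = ∑ i, s i := by simp only [s, d, sum_sub_distrib, sum_comm (f := z)]
  rcases (sum_nonneg fun i _ => hs0 i).eq_or_lt with hT | hT
  · have hs : ∀ i, s i = 0 := fun i =>
      (sum_eq_zero_iff_of_nonneg fun i _ => hs0 i).1 hT.symm i (mem_univ i)
    have hd : ∀ j, d j = 0 := fun j =>
      (sum_eq_zero_iff_of_nonneg fun j _ => hd0 j).1 (hsd.trans hT.symm) j (mem_univ j)
    exact ⟨z, ⟨h0, fun i => by linarith [hs i], fun j => by linarith [hd j]⟩, fun _ _ => le_rfl⟩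
  -- Spread the missing row mass `s` over the columns in proportion to their missing mass `d`.
  set T := ∑ i, s i
  have hsdT : ∀ i j, 0 ≤ s i * d j / T := fun i j => div_nonneg (mul_nonneg (hs0 i) (hd0 j)) hT.le
  refine ⟨fun i j => z i j + s i * d j / T,
    ⟨fun i j => add_nonneg (h0 i j) (hsdT i j), fun i => ?_, fun j => ?_⟩,
    fun i j => le_add_of_nonneg_right (hsdT i j)⟩
  · rw [sum_add_distrib, ← sum_div, ← mul_sum, hsd, mul_div_cancel_right₀ _ hT.ne']
    simp [s]
  · rw [sum_add_distrib, ← sum_div, ← sum_mul, mul_div_cancel_left₀ _ hT.ne']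
    simp [d]

def topPref {n : ℕ} (k : Fin n) : Pref n := Equiv.swap k ⟨0, k.pos⟩

theorem filter_topPref_le_self {n : ℕ} (k : Fin n) :
    univ.filter (fun j => topPref k j ≤ topPref k k) = {k} := by
  ext j
  simp only [mem_filter, mem_univ, true_and, mem_singleton, topPref, Equiv.swap_apply_left]
  refine ⟨fun h => (Equiv.swap k ⟨0, k.pos⟩).injective ?_,
    fun h => by rw [h, Equiv.swap_apply_left]⟩
  rw [Equiv.swap_apply_left]
  exact Fin.ext (Nat.le_zero.1 h)

section Extension
variable {m l : ℕ}

def extendPref (Q : Pref m) : Pref (m + l) :=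
  finSumFinEquiv.permCongr (Equiv.sumCongr Q (Equiv.refl (Fin l)))

@[simp]
theorem extendPref_castAdd (Q : Pref m) (a : Fin m) :
    extendPref (l := l) Q (castAdd l a) = castAdd l (Q a) := by
  simp [extendPref]

@[simp]
theorem extendPref_natAdd (Q : Pref m) (k : Fin l) : extendPref Q (natAdd m k) = natAdd m k := by
  simp [extendPref]

theorem extendPref_castAdd_lt_natAdd (Q : Pref m) (a : Fin m) (k : Fin l) :
    extendPref Q (castAdd l a) < extendPref Q (natAdd m k) := by
  simp only [extendPref_castAdd, extendPref_natAdd, Fin.lt_def, val_castAdd, val_natAdd]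
  omega

theorem extendPref_castAdd_lt_castAdd (Q : Pref m) {a b : Fin m} (h : Q a < Q b) :
    extendPref (l := l) Q (castAdd l a) < extendPref Q (castAdd l b) := by
  rw [extendPref_castAdd, extendPref_castAdd]
  exact h

theorem AdjSwap.extendPref {Q Q' : Pref m} {j j' : Fin m} (h : AdjSwap Q Q' j j') :
    AdjSwap (extendPref (l := l) Q) (extendPref Q') (castAdd l j) (castAdd l j') := by
  obtain ⟨hrank, rfl⟩ := h
  refine ⟨by simpa using hrank, Equiv.ext fun a => ?_⟩
  induction a using Fin.addCases with
  | left a => simp [(castAdd_injective m l).swap_apply]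
  | right k =>
    rw [Equiv.trans_apply, Equiv.swap_apply_of_ne_of_ne (by simp [Fin.ext_iff]; omega)
      (by simp [Fin.ext_iff]; omega)]
    simp

theorem sum_filter_extendPref_le_castAdd (Q : Pref m) (j : Fin m) (g : Fin (m + l) → ℝ) :
    ∑ k ∈ univ.filter (fun k => extendPref Q k ≤ extendPref Q (castAdd l j)), g k =
      ∑ a ∈ univ.filter (fun a => Q a ≤ Q j), g (castAdd l a) := by
  rw [sum_filter, sum_filter, Fin.sum_univ_add, sum_eq_zero (s := univ) fun k _ =>
    if_neg (extendPref_castAdd_lt_natAdd Q j k).not_ge, add_zero]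
  simp only [extendPref_castAdd, Fin.le_def, val_castAdd]

def extendProfile (Q : Fin m → Pref m) : Fin (m + l) → Pref (m + l) :=
  Fin.append (fun i => extendPref (Q i)) (fun k => topPref (natAdd m k))

@[simp]
theorem extendProfile_castAdd (Q : Fin m → Pref m) (i : Fin m) :
    extendProfile (l := l) Q (castAdd l i) = extendPref (Q i) :=
  append_left _ _ i

@[simp]
theorem extendProfile_natAdd (Q : Fin m → Pref m) (k : Fin l) :
    extendProfile Q (natAdd m k) = topPref (natAdd m k) :=
  append_right _ _ k

theorem extendProfile_update (Q : Fin m → Pref m) (i : Fin m) (Q' : Pref m) :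
    extendProfile (l := l) (Function.update Q i Q') =
      Function.update (extendProfile Q) (castAdd l i) (extendPref Q') := by
  funext a
  induction a using Fin.addCases with
  | left a =>
    rcases eq_or_ne a i with rfl | h
    · simp
    · simp [Function.update_of_ne h, Function.update_of_ne ((castAdd_injective m l).ne h)]
  | right k =>
    rw [Function.update_of_ne (by simp [Fin.ext_iff]; omega)]
    simp

def lowBlock (x : Assignment (m + l)) : Assignment m := fun i j => x (castAdd l i) (castAdd l j)

def blockDiag (w : Assignment m) : Assignment (m + l) :=
  Fin.append (fun i => Fin.append (w i) 0) fun k => Fin.append 0 fun k' => if k = k' then 1 else 0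

section blockDiag
variable (w : Assignment m) (i j : Fin m) (k k' : Fin l)

@[simp] theorem blockDiag_castAdd_castAdd :
    blockDiag (l := l) w (castAdd l i) (castAdd l j) = w i j := by
  simp [blockDiag]

@[simp] theorem blockDiag_castAdd_natAdd : blockDiag w (castAdd l i) (natAdd m k) = 0 := by
  simp [blockDiag]

@[simp] theorem blockDiag_natAdd_castAdd : blockDiag w (natAdd m k) (castAdd l j) = 0 := by
  simp [blockDiag]

@[simp] theorem blockDiag_natAdd_natAdd :
    blockDiag w (natAdd m k) (natAdd m k') = if k = k' then 1 else 0 := by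
  simp [blockDiag]

end blockDiag

theorem BiStochastic.blockDiag {w : Assignment m} (hw : BiStochastic w) :
    BiStochastic (blockDiag (l := l) w) := by
  obtain ⟨h0, hrow, hcol⟩ := hw
  refine ⟨fun a b => ?_, fun a => ?_, fun b => ?_⟩
  · induction a using Fin.addCases <;> induction b using Fin.addCases <;> simp [h0]
    split_ifs <;> norm_num
  · induction a using Fin.addCases <;> simp [Fin.sum_univ_add, hrow]
  · induction b using Fin.addCases <;> simp [Fin.sum_univ_add, hcol]

theorem BiStochastic.lowBlock {x : Assignment (m + l)} (hx : BiStochastic x)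
    (hdiag : ∀ k, x (natAdd m k) (natAdd m k) = 1) : BiStochastic (lowBlock x) := by
  have hne : ∀ a k, castAdd l a ≠ natAdd m k := fun a k => by simp [Fin.ext_iff]; omega
  refine ⟨fun i j => hx.1 _ _, fun i => ?_, fun j => ?_⟩
  · have := hx.2.1 (castAdd l i)
    rwa [Fin.sum_univ_add, sum_eq_zero fun k _ => hx.col_eq_zero_of_eq_one (hdiag k) (hne i k),
      add_zero] at this
  · have := hx.2.2 (castAdd l j)
    rwa [Fin.sum_univ_add, sum_eq_zero fun k _ => hx.row_eq_zero_of_eq_one (hdiag k) (hne j k),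
      add_zero] at this

theorem fosd_blockDiag {Q : Fin m → Pref m} {x : Assignment (m + l)} {w : Assignment m}
    (hx : BiStochastic x) (hw : BiStochastic w) (hdom : ∀ i, FOSD (Q i) (w i) (lowBlock x i))
    (a : Fin (m + l)) : FOSD (extendProfile Q a) (blockDiag w a) (x a) := by
  have hrow := (hw.blockDiag (l := l)).2.1 a
  induction a using Fin.addCases with
  | left i =>
    refine FOSD.of_upper_closed (Set.range (castAdd l)) ?_ (hx.1 _) (hx.2.1 _) hrow ?_ ?_
    · rintro _ ⟨b, rfl⟩ j hj
      induction j using Fin.addCases with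
      | left a => exact Set.mem_range_self a
      | right k =>
        rw [extendProfile_castAdd] at hj
        exact absurd hj (extendPref_castAdd_lt_natAdd _ b k).not_ge
    · intro j hj
      induction j using Fin.addCases with
      | left a => exact absurd (Set.mem_range_self a) hj
      | right k => exact blockDiag_castAdd_natAdd w i k
    · rintro _ ⟨b, rfl⟩
      simp only [extendProfile_castAdd, sum_filter_extendPref_le_castAdd, blockDiag_castAdd_castAdd]
      exact hdom i b
  | right k =>
    refine FOSD.of_upper_closed {natAdd m k} ?_ (hx.1 _) (hx.2.1 _) hrow ?_ ?_
    · rintro _ rfl j hj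
      simpa using (Finset.ext_iff.1 (filter_topPref_le_self (natAdd m k)) j).1 (by simpa using hj)
    · intro j hj
      induction j using Fin.addCases with
      | left a => exact blockDiag_natAdd_castAdd w a k
      | right k' => simpa [eq_comm] using hj
    · rintro _ rfl
      simp only [extendProfile_natAdd, filter_topPref_le_self, sum_singleton,
        blockDiag_natAdd_natAdd]
      exact hx.le_one _ _

theorem diag_eq_one_of_ordEffAt {Q : Fin m → Pref m} {x : Assignment (m + l)}
    (hx : BiStochastic x) (heff : OrdEffAt (extendProfile Q) x) (k : Fin l) :
    x (natAdd m k) (natAdd m k) = 1 := by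
  by_contra hk
  have hsum_le (f : Fin (m + l) → ℝ) (hf : ∀ a, 0 ≤ f a) : ∑ i, f (castAdd l i) ≤ ∑ a, f a := by
    rw [Fin.sum_univ_add]
    exact le_add_of_nonneg_right (sum_nonneg fun k _ => hf _)
  obtain ⟨w, hw, hxw⟩ := exists_biStochastic_ge (lowBlock x) (fun i j => hx.1 _ _)
    (fun i => (hsum_le _ (hx.1 _)).trans_eq (hx.2.1 _))
    (fun j => (hsum_le (x · _) (hx.1 · _)).trans_eq (hx.2.2 _))
  refine heff ⟨blockDiag w, hw.blockDiag,
    fosd_blockDiag hx hw fun i j => sum_le_sum fun a _ => hxw i a, natAdd m k, natAdd m k, ?_⟩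
  simp only [extendProfile_natAdd, filter_topPref_le_self, sum_singleton, blockDiag_natAdd_natAdd]
  exact (hx.le_one _ _).lt_of_ne hk

def Mechanism.restrict (φ : Mechanism (m + l)) : Mechanism m :=
  fun Q => lowBlock (φ (extendProfile Q))

variable {φ : Mechanism (m + l)}

theorem ValidMech.restrict (hv : ValidMech φ) (heff : OrdEff φ) : ValidMech φ.restrict :=
  fun _ => (hv _).lowBlock (diag_eq_one_of_ordEffAt (hv _) (heff _))

theorem UpperInvariant.restrict (h : UpperInvariant φ) : UpperInvariant φ.restrict := by
  intro Q i j j' Q' hswap k hk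
  simp only [Mechanism.restrict, lowBlock, extendProfile_update]
  exact h _ _ _ _ _ (by simpa using hswap.extendPref) _
    (by simpa only [extendProfile_castAdd] using extendPref_castAdd_lt_castAdd _ hk)

theorem LowerInvariant.restrict (h : LowerInvariant φ) : LowerInvariant φ.restrict := by
  intro Q i j j' Q' hswap k hk
  simp only [Mechanism.restrict, lowBlock, extendProfile_update]
  exact h _ _ _ _ _ (by simpa using hswap.extendPref) _
    (by simpa only [extendProfile_castAdd] using extendPref_castAdd_lt_castAdd _ hk)

theorem OrdEff.restrict (hv : ValidMech φ) (heff : OrdEff φ) : OrdEff φ.restrict := by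
  rintro Q ⟨w, hw, hdom, i, j, hlt⟩
  refine heff (extendProfile Q) ⟨blockDiag w, hw.blockDiag, fosd_blockDiag (hv _) hw hdom,
    castAdd l i, castAdd l j, ?_⟩
  simp only [extendProfile_castAdd, sum_filter_extendPref_le_castAdd, blockDiag_castAdd_castAdd]
  exact hlt

theorem SymmetricMech.restrict (h : SymmetricMech φ) : SymmetricMech φ.restrict :=
  fun Q i i' hQ => funext fun j =>
    congrFun (h (extendProfile Q) (castAdd l i) (castAdd l i') (by simp [hQ])) (castAdd l j)

end Extension

theorem impossibility_extends_to_larger_n (n : ℕ) (hn : 4 < n)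
    (h : ∃ φ : Mechanism n, ValidMech φ ∧ UpperInvariant φ ∧ LowerInvariant φ ∧
      OrdEff φ ∧ SymmetricMech φ) :
    ∃ ψ : Mechanism 4, ValidMech ψ ∧ UpperInvariant ψ ∧ LowerInvariant ψ ∧
      OrdEff ψ ∧ SymmetricMech ψ := by
  obtain ⟨l, rfl⟩ := Nat.exists_eq_add_of_le hn.le
  obtain ⟨φ, hv, hup, hlow, heff, hsymm⟩ := h
  exact ⟨φ.restrict, hv.restrict heff, hup.restrict, hlow.restrict, heff.restrict hv,
    hsymm.restrict⟩
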